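/- Let (S', θ) be modular data with s = S'/δ unitary symmetric, s⁴ = 1, (st)³ = η^{-1}s², η = p⁺/δ. Define on the gauged labels the diagonal matrix T^eq with entries θ_X θ_Y at (XY), θ_X² at (X,ε), and ε η^{1/2} θ_X^{1/2} at (X̂,ε), and let s^eq := S^eq/(2μ) with S^eq the gauged S-matrix defined blockwise as before. Then (s^eq t^eq)³ = η_eq^{-1} (s^eq)² with η_eq = η², where t^eq = T^eq. -/

import Mathlib

/-- Gauged labels of the ℤ/2 permutation gauging: unordered pairs `(XY)` with
`X ≠ Y` (modelled as pairs with `X < Y`), labels `(X,ε)`, and labels `(X̂,ε)`. -/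
abbrev GLabel (I : Type) [LinearOrder I] : Type :=
  {p : I × I // p.1 < p.2} ⊕ (I × Bool) ⊕ (I × Bool)

/-- The sign `ε ∈ {+1, -1}` as a complex number. -/
def sg (ε : Bool) : ℂ := if ε then 1 else -1

/-- The gauged S-matrix `S^eq`, defined blockwise from modular data
`(S', θ)`, a choice of square roots `θ^{1/2}`, `δ = √μ` and `η = p⁺/δ`. -/
noncomputable def gaugedS {I : Type} [LinearOrder I] [Fintype I]
    (S : Matrix I I ℂ) (θ sqrtθ : I → ℂ) (δ η : ℂ) :
    Matrix (GLabel I) (GLabel I) ℂ :=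
  Matrix.of fun a b =>
    match a, b with
    | Sum.inl p, Sum.inl q =>
        2 * (S p.1.1 q.1.1 * S p.1.2 q.1.2 + S p.1.1 q.1.2 * S p.1.2 q.1.1)
    | Sum.inl p, Sum.inr (Sum.inl (Z, _)) => 2 * S p.1.1 Z * S p.1.2 Z
    | Sum.inr (Sum.inl (X, _)), Sum.inl q => 2 * S X q.1.1 * S X q.1.2
    | Sum.inl _, Sum.inr (Sum.inr _) => 0
    | Sum.inr (Sum.inr _), Sum.inl _ => 0
    | Sum.inr (Sum.inl (X, _)), Sum.inr (Sum.inl (Y, _)) => (S X Y) ^ 2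
    | Sum.inr (Sum.inl (X, ε₁)), Sum.inr (Sum.inr (Y, _)) => sg ε₁ * δ * S X Y
    | Sum.inr (Sum.inr (X, _)), Sum.inr (Sum.inl (Y, ε₂)) => sg ε₂ * δ * S Y X
    | Sum.inr (Sum.inr (X, ε₁)), Sum.inr (Sum.inr (Y, ε₂)) =>
        sg ε₁ * sg ε₂ * η⁻¹ * sqrtθ X * sqrtθ Y * (∑ V, S X V * θ V ^ 2 * S V Y)

/-- The diagonal entries of the gauged T-matrix: `θ_Xθ_Y` at `(XY)`, `θ_X²` at
`(X,ε)` and `ε η^{1/2} θ_X^{1/2}` at `(X̂,ε)`. -/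
noncomputable def gaugedTdiag {I : Type} [LinearOrder I]
    (θ sqrtθ : I → ℂ) (sqrtη : ℂ) : GLabel I → ℂ
  | Sum.inl p => θ p.1.1 * θ p.1.2
  | Sum.inr (Sum.inl (X, _)) => θ X ^ 2
  | Sum.inr (Sum.inr (X, ε)) => sg ε * sqrtη * sqrtθ X

/-!
Cancelling `S` against `S⁴ = δ⁴` turns `(Sθ)³ = η⁻¹δ S²` into `θSθSθ = η⁻¹δ S`. Its `(1, 1)` entry
reads `ηδ = p⁺ = η⁻¹δ d₁`, so `d₁ = η²`, and `|η| = 1`, `d₁ > 0` force `η² = 1`.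

It then suffices to show `T^eq S^eq T^eq S^eq T^eq = 2δ² S^eq`, entry by entry. For two untwisted
labels the intermediate sum over pairs `(Z₁Z₂)` and labels `(Z, ±)` is half a sum over all ordered
pairs `(Z₁, Z₂)`, and there it factors into products of entries of `SθS`, which `θSθSθ = ηδ S`
(as `η⁻¹ = η`) evaluates. In the twisted blocks the sums over the sign `ε` of an intermediate label either cancel or
double, leaving `SθSθ²S`-type products that reduce to `S` by the same relation.
-/

open Matrix Finset

theorem Matrix.mul_diagonal_mul_apply {m n o R : Type*} [Fintype n] [DecidableEq n]
    [NonUnitalNonAssocSemiring R] (A : Matrix m n R) (d : n → R) (B : Matrix n o R) (i : m)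
    (j : o) : (A * diagonal d * B) i j = ∑ k, A i k * d k * B k j := by
  rw [mul_apply]; simp only [mul_diagonal]

theorem mul_mul_mul_mul_eq_smul_of_pow_four_eq {𝕜 R : Type*} [Field 𝕜] [Ring R] [Algebra 𝕜 R]
    {s t : R} {c k : 𝕜} (hc : c ≠ 0) (hs : s ^ 4 = c • 1) (hst : (s * t) ^ 3 = k • s ^ 2) :
    t * s * t * s * t = k • s := by
  have hinv : (c⁻¹ • s ^ 3) * s = 1 := by
    rw [smul_mul_assoc, ← pow_succ, hs, smul_smul, inv_mul_cancel₀ hc, one_smul]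
  calc t * s * t * s * t = (c⁻¹ • s ^ 3) * s * (t * s * t * s * t) := by rw [hinv, one_mul]
    _ = (c⁻¹ • s ^ 3) * (s * t) ^ 3 := by simp only [pow_succ, pow_zero, one_mul, mul_assoc]
    _ = k • ((c⁻¹ • s ^ 3) * s * s) := by rw [hst, mul_smul_comm, sq, mul_assoc]
    _ = k • s := by rw [hinv, one_mul]

theorem smul_mul_pow_three_of_mul_mul_mul_mul_eq_smul {𝕜 R : Type*} [CommSemiring 𝕜]
    [Semiring R] [Algebra 𝕜 R] {s t : R} {k : 𝕜} (h : t * s * t * s * t = k • s) (c : 𝕜) :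
    (c • s * t) ^ 3 = (c ^ 3 * k) • s ^ 2 := by
  rw [smul_mul_assoc, smul_pow, show (s * t) ^ 3 = s * (t * s * t * s * t) by
    simp only [pow_succ, pow_zero, one_mul, mul_assoc], h, mul_smul_comm, smul_smul, sq]

theorem sum_sum_eq_two_nsmul_sum_lt_add_sum_diag {I M : Type*} [LinearOrder I] [Fintype I]
    [AddCommMonoid M] (g : I → I → M) (hg : ∀ a b, g a b = g b a) :
    ∑ z₁, ∑ z₂, g z₁ z₂ = 2 • ∑ p : {p : I × I // p.1 < p.2}, g p.1.1 p.1.2 + ∑ z, g z z := by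
  have hlt : ∑ p : {p : I × I // p.1 < p.2}, g p.1.1 p.1.2
      = ∑ z₁, ∑ z₂, if z₁ < z₂ then g z₁ z₂ else 0 := by
    rw [← Finset.sum_subtype ({p : I × I | p.1 < p.2} : Finset _) (by simp)
      fun p : I × I => g p.1 p.2, Finset.sum_filter, Fintype.sum_prod_type]
  have hgt : ∑ z₁, ∑ z₂, (if z₂ < z₁ then g z₁ z₂ else 0)
      = ∑ z₁, ∑ z₂, if z₁ < z₂ then g z₁ z₂ else 0 := by
    rw [Finset.sum_comm]; simp only [hg]
  calc ∑ z₁, ∑ z₂, g z₁ z₂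
      = ∑ z₁, ∑ z₂, ((if z₁ < z₂ then g z₁ z₂ else 0) + (if z₂ < z₁ then g z₁ z₂ else 0)
          + if z₁ = z₂ then g z₁ z₂ else 0) := by
        refine sum_congr rfl fun z₁ _ => sum_congr rfl fun z₂ _ => ?_
        rcases lt_trichotomy z₁ z₂ with h | rfl | h
        · simp [h, h.not_gt, h.ne]
        · simp
        · simp [h, h.not_gt, h.ne']
    _ = _ := by simp only [sum_add_distrib, sum_ite_eq, mem_univ, if_true, hgt, ← hlt, two_nsmul]

theorem sum_sum_symmetrized_mul {I R : Type*} [Fintype I] [CommSemiring R]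
    (a b c e w : I → R) :
    ∑ z₁, ∑ z₂, (a z₁ * b z₂ + a z₂ * b z₁) * (w z₁ * w z₂) * (c z₁ * e z₂ + c z₂ * e z₁)
      = 2 * ((∑ z, a z * w z * c z) * (∑ z, b z * w z * e z)
        + (∑ z, a z * w z * e z) * (∑ z, b z * w z * c z)) := by
  calc _ = ∑ z₁, ∑ z₂, (a z₁ * w z₁ * c z₁ * (b z₂ * w z₂ * e z₂)
          + a z₁ * w z₁ * e z₁ * (b z₂ * w z₂ * c z₂) + b z₁ * w z₁ * c z₁ * (a z₂ * w z₂ * e z₂)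
          + b z₁ * w z₁ * e z₁ * (a z₂ * w z₂ * c z₂)) :=
        sum_congr rfl fun _ _ => sum_congr rfl fun _ _ => by ring
    _ = _ := by simp only [sum_add_distrib, ← sum_mul_sum]; ring

section TwistSandwich

variable {I : Type} [Fintype I] [DecidableEq I] {S : Matrix I I ℂ} {θ : I → ℂ} {k : ℂ}

theorem twist_sandwich_apply (hK : diagonal θ * S * diagonal θ * S * diagonal θ = k • S)
    (X Y : I) : θ X * (S * diagonal θ * S) X Y * θ Y = k * S X Y := by
  have := congrFun (congrFun hK X) Y
  rwa [show diagonal θ * S * diagonal θ * S * diagonal θ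
      = diagonal θ * (S * diagonal θ * S) * diagonal θ by simp only [mul_assoc],
    mul_diagonal, diagonal_mul, Matrix.smul_apply, smul_eq_mul] at this

theorem twist_sandwich_mul_twist_sandwich
    (hK : diagonal θ * S * diagonal θ * S * diagonal θ = k • S) (X Y Z W : I) :
    θ X * θ Z * ((S * diagonal θ * S) X Y * (S * diagonal θ * S) Z W) * (θ Y * θ W)
      = k ^ 2 * (S X Y * S Z W) := by
  rw [show θ X * θ Z * ((S * diagonal θ * S) X Y * (S * diagonal θ * S) Z W) * (θ Y * θ W)
      = (θ X * (S * diagonal θ * S) X Y * θ Y) * (θ Z * (S * diagonal θ * S) Z W * θ W) by ring,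
    twist_sandwich_apply hK, twist_sandwich_apply hK]
  ring

theorem sq_mul_twist_sandwich_apply (hK : diagonal θ * S * diagonal θ * S * diagonal θ = k • S)
    (X Y : I) :
    θ X ^ 2 * (S * diagonal θ * (S * diagonal (θ ^ 2 : I → ℂ) * S)) X Y * θ Y
      = k ^ 2 * S X Y := by
  have h : diagonal (θ ^ 2 : I → ℂ) * (S * diagonal θ * (S * diagonal (θ ^ 2 : I → ℂ) * S))
      * diagonal θ = k ^ 2 • S :=
    calc _ = diagonal θ * (diagonal θ * S * diagonal θ * S * diagonal θ)
          * (diagonal θ * S * diagonal θ) := by rw [← diagonal_pow, sq]; simp only [mul_assoc]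
      _ = diagonal θ * (k • S) * (diagonal θ * S * diagonal θ) := by rw [hK]
      _ = k • (diagonal θ * S * diagonal θ * S * diagonal θ) := by
          simp only [mul_smul_comm, smul_mul_assoc, mul_assoc]
      _ = k ^ 2 • S := by rw [hK, smul_smul, sq]
  simpa [mul_diagonal, diagonal_mul] using congrFun (congrFun h X) Y

theorem twist_sandwich_mul_sq_apply (hK : diagonal θ * S * diagonal θ * S * diagonal θ = k • S)
    (X Y : I) :
    θ X * (S * diagonal (θ ^ 2 : I → ℂ) * S * diagonal θ * S) X Y * θ Y ^ 2
      = k ^ 2 * S X Y := by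
  have h : diagonal θ * (S * diagonal (θ ^ 2 : I → ℂ) * S * diagonal θ * S)
      * diagonal (θ ^ 2 : I → ℂ) = k ^ 2 • S :=
    calc _ = (diagonal θ * S * diagonal θ) * (diagonal θ * S * diagonal θ * S * diagonal θ)
          * diagonal θ := by rw [← diagonal_pow, sq]; simp only [mul_assoc]
      _ = (diagonal θ * S * diagonal θ) * (k • S) * diagonal θ := by rw [hK]
      _ = k • (diagonal θ * S * diagonal θ * S * diagonal θ) := by
          simp only [mul_smul_comm, smul_mul_assoc, mul_assoc]
      _ = k ^ 2 • S := by rw [hK, smul_smul, sq]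
  simpa [mul_diagonal, diagonal_mul] using congrFun (congrFun h X) Y

theorem sq_eq_one_of_twist_sandwich {one : I} {d : I → ℝ} {δ η : ℂ} (hS : S.IsSymm)
    (hS1 : ∀ X, S one X = d X) (hd : 0 < d one) (hθ1 : θ one = 1) (hδ : δ ≠ 0)
    (hη : η = (∑ X, θ X * (d X : ℂ) ^ 2) / δ) (hηabs : ‖η‖ = 1)
    (hK : diagonal θ * S * diagonal θ * S * diagonal θ = (η⁻¹ * δ) • S) : η ^ 2 = 1 := by
  have hη0 : η ≠ 0 := by rintro rfl; simp at hηabs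
  have h := twist_sandwich_apply hK one one
  have hK11 : (S * diagonal θ * S) one one = η * δ := by
    rw [hη, div_mul_cancel₀ _ hδ, mul_diagonal_mul_apply]
    refine sum_congr rfl fun X _ => ?_
    rw [hS.apply one X, hS1]; ring
  rw [hθ1, hK11, hS1] at h
  have hd1 : (d one : ℂ) = η ^ 2 := by
    field_simp at h
    linear_combination -h
  have hd1_norm := congrArg norm hd1
  rw [norm_pow, hηabs, one_pow, Complex.norm_real, Real.norm_of_nonneg hd.le] at hd1_norm
  rw [← hd1, hd1_norm, Complex.ofReal_one]

end TwistSandwich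

@[simp] theorem sg_true : sg true = 1 := rfl

@[simp] theorem sg_false : sg false = -1 := rfl

theorem sg_mul_self (ε : Bool) : sg ε * sg ε = 1 := by cases ε <;> simp

section Gauged

variable {I : Type} [LinearOrder I] [Fintype I]

/-- Up to the factor `c`, `g` extends `f` from the pairs `(Z₁Z₂)` to all ordered pairs, while each
label `(Z, ±)` carries a quarter of the diagonal value `g Z Z`; ordered pairs meet every `(Z₁Z₂)`
twice, so the sum doubles. -/
theorem two_mul_sum_gLabel_of_untwisted (f : GLabel I → ℂ) (c : ℂ) (g : I → I → ℂ)
    (hg : ∀ z₁ z₂, g z₁ z₂ = g z₂ z₁) (hpair : ∀ r, f (.inl r) = c * g r.1.1 r.1.2)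
    (hfixed : ∀ Z ε, 4 * f (.inr (.inl (Z, ε))) = c * g Z Z)
    (htwisted : ∀ Z, ∑ ε, f (.inr (.inr (Z, ε))) = 0) :
    2 * ∑ a, f a = c * ∑ z₁, ∑ z₂, g z₁ z₂ := by
  have hfixed' : ∀ Z ε, f (.inr (.inl (Z, ε))) = c / 4 * g Z Z := fun Z ε => by
    linear_combination hfixed Z ε / 4
  rw [sum_sum_eq_two_nsmul_sum_lt_add_sum_diag g hg]
  simp only [Fintype.sum_sum_type, Fintype.sum_prod_type, hpair, hfixed', htwisted,
    Fintype.sum_bool, sum_const_zero, add_zero, sum_add_distrib, ← mul_sum, two_nsmul]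
  ring

variable {S : Matrix I I ℂ} {θ sqrtθ : I → ℂ} {δ η sqrtη : ℂ}

local notation "Seq" => gaugedS S θ sqrtθ δ η
local notation "Teq" => gaugedTdiag θ sqrtθ sqrtη

theorem gaugedS_mul_diagonal_mul_gaugedS_pair_pair (p q : {p : I × I // p.1 < p.2}) :
    (Seq * diagonal Teq * Seq) (.inl p) (.inl q) = 4 * ((S * diagonal θ * S) p.1.1 q.1.1 *
      (S * diagonal θ * S) p.1.2 q.1.2 + (S * diagonal θ * S) p.1.1 q.1.2 *
        (S * diagonal θ * S) p.1.2 q.1.1) := by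
  have h := two_mul_sum_gLabel_of_untwisted (fun c => Seq (.inl p) c * Teq c * Seq c (.inl q)) 4
    (fun z₁ z₂ => (S p.1.1 z₁ * S p.1.2 z₂ + S p.1.1 z₂ * S p.1.2 z₁) * (θ z₁ * θ z₂) *
      (S z₁ q.1.1 * S z₂ q.1.2 + S z₂ q.1.1 * S z₁ q.1.2))
    (fun _ _ => by ring) (fun _ => by simp [gaugedS, gaugedTdiag]; ring)
    (fun _ _ => by simp [gaugedS, gaugedTdiag]; ring) (fun _ => by simp [gaugedS])
  rw [sum_sum_symmetrized_mul] at h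
  simp only [mul_diagonal_mul_apply]
  linear_combination h / 2

theorem gaugedS_mul_diagonal_mul_gaugedS_pair_fixed (p : {p : I × I // p.1 < p.2}) (Y : I)
    (ε : Bool) :
    (Seq * diagonal Teq * Seq) (.inl p) (.inr (.inl (Y, ε)))
      = 4 * ((S * diagonal θ * S) p.1.1 Y * (S * diagonal θ * S) p.1.2 Y) := by
  have h := two_mul_sum_gLabel_of_untwisted
    (fun c => Seq (.inl p) c * Teq c * Seq c (.inr (.inl (Y, ε)))) 2
    (fun z₁ z₂ => (S p.1.1 z₁ * S p.1.2 z₂ + S p.1.1 z₂ * S p.1.2 z₁) * (θ z₁ * θ z₂) *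
      (S z₁ Y * S z₂ Y + S z₂ Y * S z₁ Y))
    (fun _ _ => by ring) (fun _ => by simp [gaugedS, gaugedTdiag]; ring)
    (fun _ _ => by simp [gaugedS, gaugedTdiag]; ring) (fun _ => by simp [gaugedS])
  rw [sum_sum_symmetrized_mul] at h
  simp only [mul_diagonal_mul_apply]
  linear_combination h / 2

theorem gaugedS_mul_diagonal_mul_gaugedS_fixed_pair (X : I) (ε : Bool)
    (q : {p : I × I // p.1 < p.2}) :
    (Seq * diagonal Teq * Seq) (.inr (.inl (X, ε))) (.inl q)
      = 4 * ((S * diagonal θ * S) X q.1.1 * (S * diagonal θ * S) X q.1.2) := by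
  have h := two_mul_sum_gLabel_of_untwisted
    (fun c => Seq (.inr (.inl (X, ε))) c * Teq c * Seq c (.inl q)) 2
    (fun z₁ z₂ => (S X z₁ * S X z₂ + S X z₂ * S X z₁) * (θ z₁ * θ z₂) *
      (S z₁ q.1.1 * S z₂ q.1.2 + S z₂ q.1.1 * S z₁ q.1.2))
    (fun _ _ => by ring) (fun _ => by simp [gaugedS, gaugedTdiag]; ring)
    (fun _ _ => by simp [gaugedS, gaugedTdiag]; ring) (fun _ => by simp [gaugedS])
  rw [sum_sum_symmetrized_mul] at h
  simp only [mul_diagonal_mul_apply]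
  linear_combination h / 2

theorem gaugedS_mul_diagonal_mul_gaugedS_fixed_fixed (X : I) (ε₁ : Bool) (Y : I) (ε₂ : Bool) :
    (Seq * diagonal Teq * Seq) (.inr (.inl (X, ε₁))) (.inr (.inl (Y, ε₂)))
      = 2 * (S * diagonal θ * S) X Y ^ 2 := by
  have h := two_mul_sum_gLabel_of_untwisted
    (fun c => Seq (.inr (.inl (X, ε₁))) c * Teq c * Seq c (.inr (.inl (Y, ε₂)))) 1
    (fun z₁ z₂ => (S X z₁ * S X z₂ + S X z₂ * S X z₁) * (θ z₁ * θ z₂) *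
      (S z₁ Y * S z₂ Y + S z₂ Y * S z₁ Y))
    (fun _ _ => by ring) (fun _ => by simp [gaugedS, gaugedTdiag]; ring)
    (fun _ _ => by simp [gaugedS, gaugedTdiag]; ring) (fun _ => by simp [gaugedS, gaugedTdiag])
  rw [sum_sum_symmetrized_mul] at h
  simp only [mul_diagonal_mul_apply]
  linear_combination h / 2

theorem gaugedS_mul_diagonal_mul_gaugedS_pair_twisted (p : {p : I × I // p.1 < p.2}) (Y : I)
    (ε : Bool) : (Seq * diagonal Teq * Seq) (.inl p) (.inr (.inr (Y, ε))) = 0 := by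
  simp [mul_diagonal_mul_apply, Fintype.sum_prod_type, gaugedS, gaugedTdiag]

theorem gaugedS_mul_diagonal_mul_gaugedS_twisted_pair (X : I) (ε : Bool)
    (q : {p : I × I // p.1 < p.2}) :
    (Seq * diagonal Teq * Seq) (.inr (.inr (X, ε))) (.inl q) = 0 := by
  simp [mul_diagonal_mul_apply, Fintype.sum_prod_type, gaugedS, gaugedTdiag]

theorem gaugedS_mul_diagonal_mul_gaugedS_fixed_twisted (hsqθ : ∀ X, sqrtθ X ^ 2 = θ X) (X : I)
    (ε₁ : Bool) (Y : I) (ε₂ : Bool) :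
    (Seq * diagonal Teq * Seq) (.inr (.inl (X, ε₁))) (.inr (.inr (Y, ε₂)))
      = 2 * sg ε₁ * sg ε₂ * δ * sqrtη * η⁻¹ * sqrtθ Y *
        (S * diagonal θ * (S * diagonal (θ ^ 2 : I → ℂ) * S)) X Y := by
  simp only [mul_diagonal_mul_apply, Fintype.sum_sum_type, Fintype.sum_prod_type,
    Fintype.sum_bool]
  simp [gaugedS, gaugedTdiag]
  rw [mul_sum]
  refine sum_congr rfl fun Z _ => ?_
  rw [← hsqθ Z]
  ring

theorem gaugedS_mul_diagonal_mul_gaugedS_twisted_fixed (hsqθ : ∀ X, sqrtθ X ^ 2 = θ X) (X : I)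
    (ε₁ : Bool) (Y : I) (ε₂ : Bool) :
    (Seq * diagonal Teq * Seq) (.inr (.inr (X, ε₁))) (.inr (.inl (Y, ε₂)))
      = 2 * sg ε₁ * sg ε₂ * δ * sqrtη * η⁻¹ * sqrtθ X *
        (S * diagonal (θ ^ 2 : I → ℂ) * S * diagonal θ * Sᵀ) X Y := by
  simp only [mul_diagonal_mul_apply, Fintype.sum_sum_type, Fintype.sum_prod_type,
    Fintype.sum_bool]
  simp [gaugedS, gaugedTdiag]
  rw [mul_sum]
  refine sum_congr rfl fun Z _ => ?_
  rw [← hsqθ Z]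
  ring

theorem gaugedS_mul_diagonal_mul_gaugedS_twisted_twisted (X : I) (ε₁ : Bool) (Y : I)
    (ε₂ : Bool) :
    (Seq * diagonal Teq * Seq) (.inr (.inr (X, ε₁))) (.inr (.inr (Y, ε₂)))
      = 2 * δ ^ 2 * (Sᵀ * diagonal (θ ^ 2 : I → ℂ) * S) X Y := by
  simp only [mul_diagonal_mul_apply, Fintype.sum_sum_type, Fintype.sum_prod_type,
    Fintype.sum_bool]
  simp [gaugedS, gaugedTdiag]
  rw [mul_sum]
  exact sum_congr rfl fun _ _ => by ring

theorem gaugedT_mul_gaugedS_mul_gaugedT_mul_gaugedS_mul_gaugedT (hS : S.IsSymm)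
    (hK : diagonal θ * S * diagonal θ * S * diagonal θ = (η * δ) • S) (hη : η ^ 2 = 1)
    (hsqθ : ∀ X, sqrtθ X ^ 2 = θ X) (hsqη : sqrtη ^ 2 = η) :
    diagonal Teq * Seq * diagonal Teq * Seq * diagonal Teq = (2 * δ ^ 2) • Seq := by
  have hk : (η * δ) ^ 2 = δ ^ 2 := by rw [mul_pow, hη, one_mul]
  have hη0 : η ≠ 0 := by rintro rfl; norm_num at hη
  have hKK := twist_sandwich_mul_twist_sandwich hK
  have hL := sq_mul_twist_sandwich_apply hK
  have hL' := twist_sandwich_mul_sq_apply hK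
  rw [hk] at hKK hL hL'
  rw [show diagonal Teq * Seq * diagonal Teq * Seq * diagonal Teq
      = diagonal Teq * (Seq * diagonal Teq * Seq) * diagonal Teq by simp only [mul_assoc]]
  ext a b
  rw [mul_diagonal, diagonal_mul, Matrix.smul_apply, smul_eq_mul]
  rcases a with p | ⟨X, ε₁⟩ | ⟨X, ε₁⟩ <;> rcases b with q | ⟨Y, ε₂⟩ | ⟨Y, ε₂⟩
  · rw [gaugedS_mul_diagonal_mul_gaugedS_pair_pair]
    simp only [gaugedS, gaugedTdiag, of_apply]
    linear_combination 4 * hKK p.1.1 q.1.1 p.1.2 q.1.2 + 4 * hKK p.1.1 q.1.2 p.1.2 q.1.1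
  · rw [gaugedS_mul_diagonal_mul_gaugedS_pair_fixed]
    simp only [gaugedS, gaugedTdiag, of_apply]
    linear_combination 4 * hKK p.1.1 Y p.1.2 Y
  · rw [gaugedS_mul_diagonal_mul_gaugedS_pair_twisted]
    simp [gaugedS]
  · rw [gaugedS_mul_diagonal_mul_gaugedS_fixed_pair]
    simp only [gaugedS, gaugedTdiag, of_apply]
    linear_combination 4 * hKK X q.1.1 X q.1.2
  · rw [gaugedS_mul_diagonal_mul_gaugedS_fixed_fixed]
    simp only [gaugedS, gaugedTdiag, of_apply]
    linear_combination 2 * hKK X Y X Y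
  · rw [gaugedS_mul_diagonal_mul_gaugedS_fixed_twisted hsqθ]
    simp only [gaugedS, gaugedTdiag, of_apply]
    grind [hL X Y, sg_mul_self ε₂, hsqθ Y, mul_inv_cancel₀ hη0]
  · rw [gaugedS_mul_diagonal_mul_gaugedS_twisted_pair]
    simp [gaugedS]
  · rw [gaugedS_mul_diagonal_mul_gaugedS_twisted_fixed hsqθ, hS.eq]
    simp only [gaugedS, gaugedTdiag, of_apply]
    grind [hL' X Y, sg_mul_self ε₁, hsqθ X, mul_inv_cancel₀ hη0, hS.apply X Y]
  · rw [gaugedS_mul_diagonal_mul_gaugedS_twisted_twisted, hS.eq]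
    simp only [gaugedS, gaugedTdiag, of_apply, mul_diagonal_mul_apply, Pi.pow_apply]
    grind [mul_inv_cancel₀ hη0]

end Gauged

theorem gauged_st_cubed_general {I : Type} [LinearOrder I] [Fintype I]
    (one : I) (S : Matrix I I ℂ) (d : I → ℝ) (δ : ℝ)
    (θ sqrtθ : I → ℂ) (η sqrtη : ℂ)
    (hSsymm : S.IsSymm)
    (hd : ∀ X, 0 < d X) (hS1 : ∀ X, S one X = (d X : ℂ))
    (hδ : 0 < δ)
    (hθ1 : θ one = 1)
    (hη_def : η = (∑ X, θ X * (d X : ℂ) ^ 2) / (δ : ℂ))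
    (hηabs : ‖η‖ = 1)
    (hs4 : S ^ 4 = ((δ : ℂ) ^ 4) • 1)
    (hst3 : (S * Matrix.diagonal θ) ^ 3 = (η⁻¹ * (δ : ℂ)) • S ^ 2)
    (hsqθ : ∀ X, sqrtθ X ^ 2 = θ X)
    (hsqη : sqrtη ^ 2 = η) :
    (((2 * (δ : ℂ) ^ 2)⁻¹ • gaugedS S θ sqrtθ (δ : ℂ) η) *
        Matrix.diagonal (gaugedTdiag θ sqrtθ sqrtη)) ^ 3
      = (η ^ 2)⁻¹ • ((2 * (δ : ℂ) ^ 2)⁻¹ • gaugedS S θ sqrtθ (δ : ℂ) η) ^ 2 := by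
  have hδ0 : (δ : ℂ) ≠ 0 := Complex.ofReal_ne_zero.mpr hδ.ne'
  have hK := mul_mul_mul_mul_eq_smul_of_pow_four_eq (pow_ne_zero 4 hδ0) hs4 hst3
  have hη2 := sq_eq_one_of_twist_sandwich hSsymm hS1 (hd one) hθ1 hδ0 hη_def hηabs hK
  rw [inv_eq_of_mul_eq_one_right (by rw [← sq, hη2])] at hK
  rw [smul_mul_pow_three_of_mul_mul_mul_mul_eq_smul
      (gaugedT_mul_gaugedS_mul_gaugedT_mul_gaugedS_mul_gaugedT hSsymm hK hη2 hsqθ hsqη),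
    hη2, inv_one, one_smul, smul_pow]
  congr 1
  field_simp

/-- The normalized gauged modular data satisfies
`(s^eq t^eq)³ = η_eq⁻¹ (s^eq)²` with `η_eq = η²`, where `s^eq = S^eq/(2μ)` and
`t^eq = T^eq` is the gauged T-matrix. -/
theorem gauged_st_cubed {I : Type} [LinearOrder I] [Fintype I]
    (one : I) (bar : I → I) (S : Matrix I I ℂ) (d : I → ℝ) (δ : ℝ)
    (θ sqrtθ : I → ℂ) (η sqrtη : ℂ)
    (hbar : ∀ X, bar (bar X) = X) (hbar1 : bar one = one)
    (hSsymm : S.IsSymm)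
    (hd : ∀ X, 0 < d X) (hS1 : ∀ X, S one X = (d X : ℂ))
    (hδ : 0 < δ) (hδ2 : δ ^ 2 = ∑ X, d X ^ 2)
    (hunit : S * S.conjTranspose = ((δ : ℂ) ^ 2) • 1)
    (hθ1 : θ one = 1) (hθbar : ∀ X, θ (bar X) = θ X) (hθne : ∀ X, θ X ≠ 0)
    (hη_def : η = (∑ X, θ X * (d X : ℂ) ^ 2) / (δ : ℂ))
    (hηabs : ‖η‖ = 1)
    (hs4 : S ^ 4 = ((δ : ℂ) ^ 4) • 1)
    (hst3 : (S * Matrix.diagonal θ) ^ 3 = (η⁻¹ * (δ : ℂ)) • S ^ 2)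
    (hsqθ : ∀ X, sqrtθ X ^ 2 = θ X) (hsqθbar : ∀ X, sqrtθ (bar X) = sqrtθ X)
    (hsqη : sqrtη ^ 2 = η) :
    (((2 * (δ : ℂ) ^ 2)⁻¹ • gaugedS S θ sqrtθ (δ : ℂ) η) *
        Matrix.diagonal (gaugedTdiag θ sqrtθ sqrtη)) ^ 3
      = (η ^ 2)⁻¹ • ((2 * (δ : ℂ) ^ 2)⁻¹ • gaugedS S θ sqrtθ (δ : ℂ) η) ^ 2 :=
  gauged_st_cubed_general one S d δ θ sqrtθ η sqrtη hSsymm hd hS1 hδ hθ1 hη_def hηabs hs4 hst3 hsqθ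
    hsqη
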